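/- (Per-block Frank-Wolfe descent inequality.) Fix k ∈ {1,…,K}, γ ∈ [0,1] and α ∈ M. Let s_k ∈ argmin_{‖s‖₁ ≤ β} ⟨s, ∇_k f(α)⟩, let α̂ be the vector equal to α except that its k-th block is replaced by (1 − γ)α_k + γ s_k, and let gap_k(α) = max_{‖s‖₁ ≤ β} ⟨α_k − s, ∇_k f(α)⟩. Then f(α̂) ≤ f(α) − γ·gap_k(α) + γ²·C_k/2, where C_k = 4β²·d_k(w)·( c_k·‖A_k‖₁² + μ₁ ). -/

import Mathlib

/-!
Along the segment `t ↦ α_k + t u`, `u = s - α_k`, the objective is a smooth function `φ` of `t`.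
Its slope at `0` is `⟪∇_k f(α), u⟫`, which equals `-gap_k(α)` because `s` minimises the linear
form over the ℓ1 ball. Its second derivative is `d_k c_k Var(v) + μ₁ d_k ‖u‖²`, where `v = -A_k u`
and the variance is taken under the softmax weights of the log-sum-exp term. As
`|v_i| ≤ ‖A_k‖₁ ‖u‖₁` and `‖u‖₂ ≤ ‖u‖₁ ≤ 2β`, this is at most `C_k`, and the inequality is the
second-order Taylor bound `φ γ ≤ φ 0 + γ φ'(0) + C_k γ² / 2`.
-/

open scoped RealInnerProductSpace BigOperators

abbrev Vec (n : ℕ) := EuclideanSpace ℝ (Fin n)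

/-- Degree of user `k`: `d_k(w) = Σ_{l≠k} w_{k,l}`. -/
def degW {K : ℕ} (W : Fin K → Fin K → ℝ) (k : Fin K) : ℝ :=
  ∑ l ∈ Finset.univ.filter (fun l => l ≠ k), W k l

/-- The boosting objective
`f(α) = Σ_k d_k(w) c_k log(Σ_i exp(−(A_k α_k)_i)) + (μ₁/2) Σ_{k<l} w_{k,l} ‖α_k − α_l‖²`. -/
noncomputable def fObj {K n : ℕ} {m : Fin K → ℕ}
    (A : ∀ k, Matrix (Fin (m k)) (Fin n) ℝ) (c : Fin K → ℝ)
    (W : Fin K → Fin K → ℝ) (μ₁ : ℝ) (α : Fin K → Vec n) : ℝ :=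
  (∑ k, degW W k * c k *
      Real.log (∑ i, Real.exp (-(Matrix.mulVec (A k) (α k) i))))
    + μ₁ / 2 * ∑ k, ∑ l ∈ Finset.univ.filter (fun l => k < l),
        W k l * ‖α k - α l‖ ^ 2

/-- The partial gradient `∇_k f(α)` of `f` with respect to the block `α_k`. -/
noncomputable def gradBlk {K n : ℕ} (f : (Fin K → Vec n) → ℝ)
    (α : Fin K → Vec n) (k : Fin K) : Vec n :=
  gradient (fun x => f (Function.update α k x)) (α k)

/-- `‖A‖₁`: the maximum ℓ1 norm of a row of `A`. -/
noncomputable def rowNormOne {m n : ℕ} (A : Matrix (Fin m) (Fin n) ℝ) : ℝ :=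
  ⨆ i, ∑ j, |A i j|

/-- The ℓ1 norm on `ℝ^n`. -/
def l1Norm {n : ℕ} (x : Vec n) : ℝ := ∑ j, |x j|

/-- The blockwise Frank-Wolfe surrogate gap
`gap_k(α) = max_{‖s‖₁ ≤ β} ⟨α_k − s, ∇_k f(α)⟩`. -/
noncomputable def blockGap {n : ℕ} (β : ℝ) (x g : Vec n) : ℝ :=
  sSup {v : ℝ | ∃ s : Vec n, l1Norm s ≤ β ∧ v = ⟪x - s, g⟫}

open Finset Real
open scoped Matrix

section Calculus

theorem sub_le_sub_of_hasDerivAt_le {f g f' g' : ℝ → ℝ} (hf : ∀ t, HasDerivAt f (f' t) t)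
    (hg : ∀ t, HasDerivAt g (g' t) t) (hle : ∀ t, 0 ≤ t → f' t ≤ g' t) {x : ℝ} (hx : 0 ≤ x) :
    f x - f 0 ≤ g x - g 0 := by
  have hd : ∀ t, HasDerivAt (fun t => g t - f t) (g' t - f' t) t := fun t => (hg t).sub (hf t)
  have hmono : MonotoneOn (fun t => g t - f t) (Set.Ici 0) := by
    refine monotoneOn_of_deriv_nonneg (convex_Ici 0)
      (fun t _ => (hd t).continuousAt.continuousWithinAt)
      (fun t _ => (hd t).differentiableAt.differentiableWithinAt) fun t ht => ?_
    rw [(hd t).deriv, sub_nonneg]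
    exact hle t (interior_subset ht)
  linarith [hmono Set.self_mem_Ici (Set.mem_Ici.2 hx) hx]

theorem le_add_mul_add_of_hasDerivAt_of_le {φ φ' φ'' : ℝ → ℝ} {L γ : ℝ}
    (hφ : ∀ t, HasDerivAt φ (φ' t) t) (hφ' : ∀ t, HasDerivAt φ' (φ'' t) t)
    (hL : ∀ t, 0 ≤ t → φ'' t ≤ L) (hγ : 0 ≤ γ) :
    φ γ ≤ φ 0 + γ * φ' 0 + L * γ ^ 2 / 2 := by
  have hslope : ∀ t, 0 ≤ t → φ' t ≤ φ' 0 + L * t := fun t ht => by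
    linarith [sub_le_sub_of_hasDerivAt_le hφ' (fun t => hasDerivAt_mul_const L) hL ht]
  have hquad : ∀ t, HasDerivAt (fun t => t * φ' 0 + L * t ^ 2 / 2) (φ' 0 + L * t) t := fun t => by
    refine (((hasDerivAt_id t).mul_const (φ' 0)).add
      (((hasDerivAt_pow 2 t).const_mul L).div_const 2)).congr_deriv ?_
    simp only [Nat.cast_ofNat]
    ring
  linarith [sub_le_sub_of_hasDerivAt_le hφ hquad hslope hγ]

theorem le_add_inner_gradient_add_of_hasDerivAt {E : Type*} [NormedAddCommGroup E]
    [InnerProductSpace ℝ E] [CompleteSpace E] {F : E → ℝ} {x u : E} {φ' φ'' : ℝ → ℝ} {L γ : ℝ}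
    (hF : DifferentiableAt ℝ F x) (hφ : ∀ t, HasDerivAt (fun t => F (x + t • u)) (φ' t) t)
    (hφ' : ∀ t, HasDerivAt φ' (φ'' t) t) (hL : ∀ t, 0 ≤ t → φ'' t ≤ L) (hγ : 0 ≤ γ) :
    F (x + γ • u) ≤ F x + γ * ⟪gradient F x, u⟫ + L * γ ^ 2 / 2 := by
  have hline : HasDerivAt (fun t : ℝ => x + t • u) u 0 := by
    simpa using ((hasDerivAt_id (0 : ℝ)).smul_const u).const_add x
  have hslope : φ' 0 = ⟪gradient F x, u⟫ := by
    rw [gradient, InnerProductSpace.toDual_symm_apply]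
    exact (hφ 0).unique (hF.hasFDerivAt.comp_hasDerivAt_of_eq 0 hline (by simp))
  simpa [hslope] using le_add_mul_add_of_hasDerivAt_of_le hφ hφ' hL hγ

end Calculus

section LogSumExp

variable {ι : Type*} [Fintype ι]

noncomputable def logSumExp (x : ι → ℝ) : ℝ := log (∑ i, exp (x i))

noncomputable def softmaxMean (x w : ι → ℝ) : ℝ := (∑ i, exp (x i) * w i) / ∑ i, exp (x i)

@[fun_prop]
theorem differentiable_logSumExp : Differentiable ℝ (logSumExp : (ι → ℝ) → ℝ) := by
  rcases isEmpty_or_nonempty ι with hι | hι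
  · have : (logSumExp : (ι → ℝ) → ℝ) = fun _ => 0 := funext fun x => by simp [logSumExp]
    exact this ▸ differentiable_const 0
  · intro x
    exact (DifferentiableAt.fun_sum fun i _ => (differentiableAt_apply i x).exp).log
      (sum_pos (fun i _ => exp_pos _) univ_nonempty).ne'

theorem softmaxMean_le {x w : ι → ℝ} {M : ℝ} (hM : 0 ≤ M) (hw : ∀ i, w i ≤ M) :
    softmaxMean x w ≤ M := by
  rcases isEmpty_or_nonempty ι with hι | hι
  · rw [softmaxMean]
    simpa using hM
  · rw [softmaxMean, div_le_iff₀ (sum_pos (fun i _ => exp_pos _) univ_nonempty), mul_sum]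
    exact sum_le_sum fun i _ => by
      rw [mul_comm M]
      exact mul_le_mul_of_nonneg_left (hw i) (exp_pos _).le

theorem softmaxMean_sq_sub_sq_le (x : ι → ℝ) {v : ι → ℝ} {M : ℝ} (hv : ∀ i, |v i| ≤ M) :
    softmaxMean x (v ^ 2) - softmaxMean x v ^ 2 ≤ M ^ 2 := by
  have hsq : ∀ i, (v ^ 2) i ≤ M ^ 2 := fun i => by
    simpa only [Pi.pow_apply, sq_abs] using pow_le_pow_left₀ (abs_nonneg (v i)) (hv i) 2
  linarith [softmaxMean_le (x := x) (sq_nonneg M) hsq, sq_nonneg (softmaxMean x v)]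

theorem hasDerivAt_sum_exp_add_smul_mul (x v w : ι → ℝ) (t : ℝ) :
    HasDerivAt (fun t => ∑ i, exp ((x + t • v) i) * w i)
      (∑ i, exp ((x + t • v) i) * (v i * w i)) t := by
  refine HasDerivAt.fun_sum fun i _ => ?_
  refine ((((hasDerivAt_id t).mul_const (v i)).const_add (x i)).exp.mul_const (w i)).congr_deriv ?_
  simp only [Pi.add_apply, Pi.smul_apply, smul_eq_mul, id]
  ring

theorem hasDerivAt_logSumExp_add_smul (x v : ι → ℝ) (t : ℝ) :
    HasDerivAt (fun t => logSumExp (x + t • v)) (softmaxMean (x + t • v) v) t := by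
  rcases isEmpty_or_nonempty ι with hι | hι
  · simpa [logSumExp, softmaxMean] using hasDerivAt_const t (0 : ℝ)
  · have := (hasDerivAt_sum_exp_add_smul_mul x v 1 t).log
      (sum_pos (fun i _ => by simpa using exp_pos ((x + t • v) i)) univ_nonempty).ne'
    simpa [logSumExp, softmaxMean] using this

theorem hasDerivAt_softmaxMean_add_smul (x v : ι → ℝ) (t : ℝ) :
    HasDerivAt (fun t => softmaxMean (x + t • v) v)
      (softmaxMean (x + t • v) (v ^ 2) - softmaxMean (x + t • v) v ^ 2) t := by
  rcases isEmpty_or_nonempty ι with hι | hι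
  · simpa [softmaxMean] using hasDerivAt_const t (0 : ℝ)
  · have hS := (sum_pos (fun i _ => exp_pos ((x + t • v) i)) univ_nonempty).ne'
    have hN := hasDerivAt_sum_exp_add_smul_mul x v v t
    have hD := hasDerivAt_sum_exp_add_smul_mul x v 1 t
    simp only [Pi.one_apply, mul_one] at hD
    refine (hN.div hD hS).congr_deriv ?_
    simp only [softmaxMean, Pi.pow_apply]
    field_simp

end LogSumExp

section Norms

variable {m n : ℕ}

theorem l1Norm_nonneg (x : Vec n) : 0 ≤ l1Norm x := sum_nonneg fun _ _ => abs_nonneg _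

theorem l1Norm_sub_le (x y : Vec n) : l1Norm (x - y) ≤ l1Norm x + l1Norm y := by
  rw [l1Norm, l1Norm, l1Norm, ← sum_add_distrib]
  exact sum_le_sum fun j _ => abs_sub _ _

theorem norm_le_l1Norm (x : Vec n) : ‖x‖ ≤ l1Norm x := by
  rw [EuclideanSpace.norm_eq, ← sqrt_sq (l1Norm_nonneg x)]
  refine sqrt_le_sqrt ?_
  simpa only [Real.norm_eq_abs, l1Norm] using
    sum_sq_le_sq_sum_of_nonneg fun j _ => abs_nonneg (x j)

theorem sum_abs_le_rowNormOne (A : Matrix (Fin m) (Fin n) ℝ) (i : Fin m) :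
    ∑ j, |A i j| ≤ rowNormOne A :=
  le_ciSup (f := fun i => ∑ j, |A i j|) (Set.finite_range _).bddAbove i

theorem rowNormOne_nonneg (A : Matrix (Fin m) (Fin n) ℝ) : 0 ≤ rowNormOne A :=
  Real.iSup_nonneg fun _ => sum_nonneg fun _ _ => abs_nonneg _

theorem abs_mulVec_le (A : Matrix (Fin m) (Fin n) ℝ) (x : Vec n) (i : Fin m) :
    |(A *ᵥ x) i| ≤ rowNormOne A * l1Norm x :=
  calc |(A *ᵥ x) i| ≤ ∑ j, |A i j| * |x j| := by
        simpa only [Matrix.mulVec, dotProduct, abs_mul] using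
          abs_sum_le_sum_abs (fun j => A i j * x j) univ
    _ ≤ ∑ j, |A i j| * l1Norm x := sum_le_sum fun j _ =>
        mul_le_mul_of_nonneg_left (single_le_sum (fun j _ => abs_nonneg (x j)) (mem_univ j))
          (abs_nonneg _)
    _ = (∑ j, |A i j|) * l1Norm x := (sum_mul _ _ _).symm
    _ ≤ rowNormOne A * l1Norm x :=
        mul_le_mul_of_nonneg_right (sum_abs_le_rowNormOne A i) (l1Norm_nonneg x)

@[fun_prop]
theorem differentiable_mulVec (A : Matrix (Fin m) (Fin n) ℝ) :
    Differentiable ℝ fun v : Fin n → ℝ => A *ᵥ v :=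
  (LinearMap.toContinuousLinearMap A.mulVecLin).differentiable

theorem blockGap_eq_inner_of_forall_inner_le {β : ℝ} {x g s : Vec n} (hs : l1Norm s ≤ β)
    (hmin : ∀ s' : Vec n, l1Norm s' ≤ β → ⟪s, g⟫ ≤ ⟪s', g⟫) :
    blockGap β x g = ⟪x - s, g⟫ := by
  refine IsGreatest.csSup_eq ⟨⟨s, hs, rfl⟩, ?_⟩
  rintro _ ⟨s', hs', rfl⟩
  simpa only [inner_sub_left] using sub_le_sub_left (hmin s' hs') _

end Norms

theorem sum_sum_filter_lt_eq_sum_filter_ne {ι : Type*} [Fintype ι] [LinearOrder ι]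
    {d : ι → ι → ℝ} (k : ι) (hd : ∀ j l, d j l = d l j)
    (hk : ∀ j l, j ≠ k → l ≠ k → d j l = 0) :
    ∑ j, ∑ l ∈ univ.filter (fun l => j < l), d j l
      = ∑ l ∈ univ.filter (fun l => l ≠ k), d k l := by
  have hrow : ∀ j ∈ univ.erase k, ∑ l ∈ univ.filter (fun l => j < l), d j l
      = if j < k then d k j else 0 := fun j hj => by
    rw [sum_congr rfl fun l _ => (?_ : d j l = if l = k then d k j else 0), sum_ite_eq']
    · simp
    · split_ifs with hl
      · rw [hl, hd]
      · exact hk j l (ne_of_mem_erase hj) hl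
  rw [← add_sum_erase _ _ (mem_univ k), sum_congr rfl hrow, ← sum_filter,
    ← sum_filter_add_sum_filter_not (univ.filter (fun l => l ≠ k)) (fun l => l < k), add_comm]
  congr 2 <;> ext l <;> simp only [mem_filter, mem_univ, mem_erase, and_true, true_and, not_lt]
  rw [lt_iff_le_and_ne, ne_comm, and_comm]

theorem degW_nonneg {K : ℕ} {W : Fin K → Fin K → ℝ} {k : Fin K} (hW : ∀ l ≠ k, 0 ≤ W k l) :
    0 ≤ degW W k :=
  sum_nonneg fun l hl => hW l (mem_filter.1 hl).2

section Objective

variable {K n : ℕ} {m : Fin K → ℕ} (A : ∀ k, Matrix (Fin (m k)) (Fin n) ℝ) (c : Fin K → ℝ)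
  (W : Fin K → Fin K → ℝ) (μ₁ : ℝ) (α : Fin K → Vec n) (k : Fin K)

noncomputable def fObjBlock (y : Vec n) : ℝ :=
  degW W k * c k * logSumExp (-(A k *ᵥ y))
    + μ₁ / 2 * ∑ l ∈ univ.filter (fun l => l ≠ k), W k l * ‖y - α l‖ ^ 2

theorem fObj_update (hW : ∀ j l, W j l = W l j) (y : Vec n) :
    fObj A c W μ₁ (Function.update α k y)
      = fObj A c W μ₁ α + (fObjBlock A c W μ₁ α k y - fObjBlock A c W μ₁ α k (α k)) := by
  have hlog : ∑ j, degW W j * c j * logSumExp (-(A j *ᵥ Function.update α k y j))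
      - ∑ j, degW W j * c j * logSumExp (-(A j *ᵥ α j))
      = degW W k * c k * logSumExp (-(A k *ᵥ y))
        - degW W k * c k * logSumExp (-(A k *ᵥ α k)) := by
    rw [← sum_sub_distrib, sum_eq_single k (fun j _ hj => by simp [hj]) (by simp),
      Function.update_self]
  have hquad : ∑ j, ∑ l ∈ univ.filter (fun l => j < l),
        W j l * ‖Function.update α k y j - Function.update α k y l‖ ^ 2
      - ∑ j, ∑ l ∈ univ.filter (fun l => j < l), W j l * ‖α j - α l‖ ^ 2
      = ∑ l ∈ univ.filter (fun l => l ≠ k), W k l * ‖y - α l‖ ^ 2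
        - ∑ l ∈ univ.filter (fun l => l ≠ k), W k l * ‖α k - α l‖ ^ 2 := by
    simp only [← sum_sub_distrib, ← mul_sub]
    rw [sum_sum_filter_lt_eq_sum_filter_ne k]
    · refine sum_congr rfl fun l hl => ?_
      rw [Function.update_self, Function.update_of_ne (mem_filter.1 hl).2]
    · intro j l
      rw [hW, norm_sub_rev, norm_sub_rev (α j)]
    · intro j l hj hl
      simp [Function.update_of_ne hj, Function.update_of_ne hl]
  simp only [fObj, fObjBlock, logSumExp, Pi.neg_apply] at hlog ⊢
  linear_combination hlog + μ₁ / 2 * hquad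

theorem differentiable_fObjBlock : Differentiable ℝ (fObjBlock A c W μ₁ α k) := by
  have hsq : ∀ l, Differentiable ℝ fun y : Vec n => ‖y - α l‖ ^ 2 :=
    fun l => (differentiable_id.sub_const _).norm_sq ℝ
  unfold fObjBlock
  fun_prop

theorem hasDerivAt_fObjBlock_line (x u : Vec n) (t : ℝ) :
    HasDerivAt (fun t => fObjBlock A c W μ₁ α k (x + t • u))
      (degW W k * c k * softmaxMean (-(A k *ᵥ x) + t • -(A k *ᵥ u)) (-(A k *ᵥ u))
        + μ₁ * ∑ l ∈ univ.filter (fun l => l ≠ k), W k l * ⟪x + t • u - α l, u⟫) t := by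
  have hline : ∀ t : ℝ, -(A k *ᵥ (x + t • u : Vec n)) = -(A k *ᵥ x) + t • -(A k *ᵥ u) :=
    fun t => by
      rw [WithLp.ofLp_add, WithLp.ofLp_smul, Matrix.mulVec_add, Matrix.mulVec_smul, neg_add,
        smul_neg]
  have hsq : ∀ l, HasDerivAt (fun t : ℝ => ‖x + t • u - α l‖ ^ 2) (2 * ⟪x + t • u - α l, u⟫) t :=
    fun l => by
      simpa using ((((hasDerivAt_id t).smul_const u).const_add x).sub_const (α l)).norm_sq
  simp only [fObjBlock, hline]
  refine (((hasDerivAt_logSumExp_add_smul _ _ t).const_mul _).add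
    ((HasDerivAt.fun_sum fun l _ => (hsq l).const_mul (W k l)).const_mul (μ₁ / 2))).congr_deriv ?_
  rw [mul_sum, mul_sum]
  congr 1
  exact sum_congr rfl fun l _ => by ring

theorem hasDerivAt_fObjBlock_line_deriv (x u : Vec n) (t : ℝ) :
    HasDerivAt (fun t => degW W k * c k
        * softmaxMean (-(A k *ᵥ x) + t • -(A k *ᵥ u)) (-(A k *ᵥ u))
        + μ₁ * ∑ l ∈ univ.filter (fun l => l ≠ k), W k l * ⟪x + t • u - α l, u⟫)
      (degW W k * c k * (softmaxMean (-(A k *ᵥ x) + t • -(A k *ᵥ u)) ((-(A k *ᵥ u)) ^ 2)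
          - softmaxMean (-(A k *ᵥ x) + t • -(A k *ᵥ u)) (-(A k *ᵥ u)) ^ 2)
        + μ₁ * degW W k * ‖u‖ ^ 2) t := by
  have hinner : ∀ l, HasDerivAt (fun t : ℝ => ⟪x + t • u - α l, u⟫) (‖u‖ ^ 2) t := fun l => by
    simpa [real_inner_self_eq_norm_sq] using
      ((((hasDerivAt_id t).smul_const u).const_add x).sub_const (α l)).inner ℝ
        (hasDerivAt_const t u)
  refine (((hasDerivAt_softmaxMean_add_smul _ _ t).const_mul _).add
    ((HasDerivAt.fun_sum fun l _ => (hinner l).const_mul (W k l)).const_mul μ₁)).congr_deriv ?_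
  rw [← sum_mul, ← degW, mul_assoc μ₁]

theorem fObj_update_add_smul_le (hW : ∀ j l, W j l = W l j) (hWk : ∀ l ≠ k, 0 ≤ W k l)
    (hc : 0 ≤ c k) (hμ₁ : 0 ≤ μ₁) {u : Vec n} {r γ : ℝ} (hu : l1Norm u ≤ r) (hγ : 0 ≤ γ) :
    fObj A c W μ₁ (Function.update α k (α k + γ • u))
      ≤ fObj A c W μ₁ α + γ * ⟪gradBlk (fObj A c W μ₁) α k, u⟫
        + degW W k * (c k * (r * rowNormOne (A k)) ^ 2 + μ₁ * r ^ 2) * γ ^ 2 / 2 := by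
  have hdiff : DifferentiableAt ℝ (fun y => fObj A c W μ₁ (Function.update α k y)) (α k) := by
    simp only [fObj_update A c W μ₁ α k hW]
    exact ((differentiable_fObjBlock A c W μ₁ α k _).sub_const _).const_add _
  have hv : ∀ i, |(-(A k *ᵥ u)) i| ≤ r * rowNormOne (A k) := fun i => by
    rw [Pi.neg_apply, abs_neg, mul_comm r]
    exact (abs_mulVec_le _ _ i).trans (mul_le_mul_of_nonneg_left hu (rowNormOne_nonneg _))
  have hu2 : ‖u‖ ^ 2 ≤ r ^ 2 :=
    pow_le_pow_left₀ (norm_nonneg u) ((norm_le_l1Norm u).trans hu) 2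
  have hD := degW_nonneg hWk
  have hdescent := le_add_inner_gradient_add_of_hasDerivAt (u := u)
    (L := degW W k * (c k * (r * rowNormOne (A k)) ^ 2 + μ₁ * r ^ 2)) hdiff
    (fun t => by
      simp only [fObj_update A c W μ₁ α k hW]
      exact ((hasDerivAt_fObjBlock_line A c W μ₁ α k (α k) u t).sub_const _).const_add _)
    (hasDerivAt_fObjBlock_line_deriv A c W μ₁ α k (α k) u) (fun t _ => by
      linarith [mul_le_mul_of_nonneg_left
        (softmaxMean_sq_sub_sq_le (-(A k *ᵥ α k) + t • -(A k *ᵥ u)) hv) (mul_nonneg hD hc),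
        mul_le_mul_of_nonneg_left hu2 (mul_nonneg hμ₁ hD)]) hγ
  simpa only [Function.update_eq_self, gradBlk] using hdescent

end Objective

theorem per_block_frank_wolfe_descent_general
    (K n : ℕ) (m : Fin K → ℕ)
    (A : ∀ k, Matrix (Fin (m k)) (Fin n) ℝ)
    (c : Fin K → ℝ) (hc : ∀ k, 0 ≤ c k)
    (W : Fin K → Fin K → ℝ) (hWsym : ∀ k l, W k l = W l k)
    (hWnn : ∀ k l, k ≠ l → 0 ≤ W k l)
    (μ₁ : ℝ) (hμ₁ : 0 ≤ μ₁) (β : ℝ)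
    (k : Fin K) (γ : ℝ) (hγ0 : 0 ≤ γ)
    (α : Fin K → Vec n) (hα : ∀ j, l1Norm (α j) ≤ β)
    (s : Vec n) (hs : l1Norm s ≤ β)
    (hargmin : ∀ s' : Vec n, l1Norm s' ≤ β →
      ⟪s, gradBlk (fObj A c W μ₁) α k⟫ ≤ ⟪s', gradBlk (fObj A c W μ₁) α k⟫) :
    fObj A c W μ₁ (Function.update α k ((1 - γ) • α k + γ • s))
      ≤ fObj A c W μ₁ α
        - γ * blockGap β (α k) (gradBlk (fObj A c W μ₁) α k)
        + γ ^ 2 * (4 * β ^ 2 * degW W k * (c k * rowNormOne (A k) ^ 2 + μ₁)) / 2 := by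
  set g := gradBlk (fObj A c W μ₁) α k
  have hsegment : (1 - γ) • α k + γ • s = α k + γ • (s - α k) := by module
  have hgap : blockGap β (α k) g = -⟪g, s - α k⟫ := by
    rw [blockGap_eq_inner_of_forall_inner_le hs hargmin, ← neg_sub, inner_neg_left, real_inner_comm]
  have hdescent := fObj_update_add_smul_le A c W μ₁ α k hWsym (fun l hl => hWnn k l hl.symm) (hc k)
    hμ₁ ((l1Norm_sub_le s (α k)).trans (add_le_add hs (hα k))) hγ0
  rw [hsegment, hgap]
  linear_combination hdescent

/-- Per-block Frank-Wolfe descent inequality.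
If `s_k` minimizes `⟨s, ∇_k f(α)⟩` over the ℓ1 ball of radius `β`, then
`f(α̂) ≤ f(α) − γ·gap_k(α) + γ²C_k/2` with
`C_k = 4β² d_k(w)(c_k ‖A_k‖₁² + μ₁)`. -/
theorem per_block_frank_wolfe_descent
    (K n : ℕ) (hK : 1 ≤ K) (m : Fin K → ℕ)
    (A : ∀ k, Matrix (Fin (m k)) (Fin n) ℝ)
    (c : Fin K → ℝ) (hc : ∀ k, 0 ≤ c k)
    (W : Fin K → Fin K → ℝ) (hWsym : ∀ k l, W k l = W l k)
    (hWnn : ∀ k l, k ≠ l → 0 ≤ W k l)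
    (μ₁ : ℝ) (hμ₁ : 0 ≤ μ₁) (β : ℝ) (hβ : 0 < β)
    (k : Fin K) (γ : ℝ) (hγ0 : 0 ≤ γ) (hγ1 : γ ≤ 1)
    (α : Fin K → Vec n) (hα : ∀ j, l1Norm (α j) ≤ β)
    (s : Vec n) (hs : l1Norm s ≤ β)
    (hargmin : ∀ s' : Vec n, l1Norm s' ≤ β →
      ⟪s, gradBlk (fObj A c W μ₁) α k⟫ ≤ ⟪s', gradBlk (fObj A c W μ₁) α k⟫) :
    fObj A c W μ₁ (Function.update α k ((1 - γ) • α k + γ • s))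
      ≤ fObj A c W μ₁ α
        - γ * blockGap β (α k) (gradBlk (fObj A c W μ₁) α k)
        + γ ^ 2 * (4 * β ^ 2 * degW W k * (c k * rowNormOne (A k) ^ 2 + μ₁)) / 2 :=
  per_block_frank_wolfe_descent_general K n m A c hc W hWsym hWnn μ₁ hμ₁ β k γ hγ0 α hα s hs hargmin
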